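/- Let (Ω, 𝒜, P) be a probability space, X, Y, Z : Ω → ℝ random variables such that Y and Z are conditionally independent given X, and let φ : [−1,1] → ℝ be convex. Then ∫_{ℝ×ℝ} ∫_ℝ φ(F_{Y|Z=z₁}(y) − F_{Y|Z=z₂}(y)) dP^Y(y) d(P^Z ⊗ P^Z)(z₁,z₂) ≤ ∫_{ℝ×ℝ} ∫_ℝ φ(F_{Y|X=x₁}(y) − F_{Y|X=x₂}(y)) dP^Y(y) d(P^X ⊗ P^X)(x₁,x₂). -/

import Mathlib

/-!
Conditional independence says that `Y` depends on `Z` only through `X`: the law of `(Z, Y)` is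
`P^Z ⊗ (κX ∘ η)`, where `η` is the conditional distribution of `X` given `Z`. Hence
`F_{Y|Z=z}(y) = ∫ F_{Y|X=x}(y) dη_z(x)`, so that `F_{Y|Z=z₁}(y) - F_{Y|Z=z₂}(y)` is the
`η_{z₁} ⊗ η_{z₂}`-average of `F_{Y|X=x₁}(y) - F_{Y|X=x₂}(y)`. Jensen's inequality moves `φ` inside
this average, and integrating over `(z₁, z₂) ∼ P^Z ⊗ P^Z` turns `η_{z₁} ⊗ η_{z₂}` into
`P^X ⊗ P^X`, because `η ∘ P^Z = P^X`.
-/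

open MeasureTheory ProbabilityTheory Set

theorem ConvexOn.measurable_indicator {s : Set ℝ} {φ : ℝ → ℝ} (hφ : ConvexOn ℝ s φ) :
    Measurable (s.indicator φ) := by
  refine measurable_of_Iic fun c => ?_
  have hpre : s.indicator φ ⁻¹' Iic c = {x ∈ s | φ x ≤ c} ∪ sᶜ ∩ {_x | 0 ≤ c} := by
    ext x; by_cases hx : x ∈ s <;> simp [hx]
  rw [hpre]
  exact ((hφ.convex_le c).ordConnected.measurableSet).union
    (hφ.1.ordConnected.measurableSet.compl.inter (MeasurableSet.const _))

theorem ConvexOn.measurable_comp {α : Type*} [MeasurableSpace α] {s : Set ℝ} {φ : ℝ → ℝ}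
    (hφ : ConvexOn ℝ s φ) {f : α → ℝ} (hf : Measurable f) (hfs : ∀ a, f a ∈ s) :
    Measurable fun a => φ (f a) := by
  convert hφ.measurable_indicator.comp hf using 1
  ext a; simp [hfs a]

theorem ConvexOn.add_rightDeriv_mul_sub_le {S : Set ℝ} {φ : ℝ → ℝ} (hφ : ConvexOn ℝ S φ)
    {x y : ℝ} (hx : x ∈ interior S) (hy : y ∈ S) :
    φ x + derivWithin φ (Ioi x) x * (y - x) ≤ φ y := by
  rcases lt_trichotomy x y with hxy | rfl | hyx
  · have := hφ.rightDeriv_le_slope_of_mem_interior hx hy hxy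
    rw [slope_def_field, le_div_iff₀ (sub_pos.2 hxy)] at this
    linarith
  · simp
  · have h1 := hφ.slope_le_leftDeriv_of_mem_interior hy hx hyx
    have h2 := hφ.leftDeriv_le_rightDeriv_of_mem_interior hx
    rw [slope_def_field, div_le_iff₀ (sub_pos.2 hyx)] at h1
    nlinarith

theorem ConvexOn.exists_abs_le_on_Icc {a b : ℝ} {φ : ℝ → ℝ} (hφ : ConvexOn ℝ (Icc a b) φ) :
    ∃ C, ∀ t ∈ Icc a b, |φ t| ≤ C := by
  set M := max (φ a) (φ b)
  refine ⟨|M| + |2 * φ ((a + b) / 2) - M|, fun t ht => ?_⟩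
  have hab : a ≤ b := ht.1.trans ht.2
  have hle : ∀ u ∈ Icc a b, φ u ≤ M := fun u hu =>
    hφ.le_max_of_mem_Icc (left_mem_Icc.2 hab) (right_mem_Icc.2 hab) hu
  have hrefl : a + b - t ∈ Icc a b := ⟨by linarith [ht.2], by linarith [ht.1]⟩
  have hmid := hφ.2 ht hrefl (by norm_num : (0 : ℝ) ≤ 1 / 2) (by norm_num : (0 : ℝ) ≤ 1 / 2)
    (by norm_num)
  rw [smul_eq_mul, smul_eq_mul, smul_eq_mul, smul_eq_mul,
    show 1 / 2 * t + 1 / 2 * (a + b - t) = (a + b) / 2 by ring] at hmid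
  rw [abs_le]
  constructor <;> linarith [hle t ht, hle _ hrefl, le_abs_self M, neg_abs_le M,
    le_abs_self (2 * φ ((a + b) / 2) - M), neg_abs_le (2 * φ ((a + b) / 2) - M)]

/- Unlike `ConvexOn.map_integral_le`, no continuity is assumed: a convex function on a closed
interval may jump up at the endpoints. -/
theorem ConvexOn.map_integral_le_of_mem_Icc {α : Type*} [MeasurableSpace α] {μ : Measure α}
    [IsProbabilityMeasure μ] {a b : ℝ} {φ : ℝ → ℝ} (hφ : ConvexOn ℝ (Icc a b) φ) {f : α → ℝ}
    (hfs : ∀ᵐ x ∂μ, f x ∈ Icc a b) (hfi : Integrable f μ)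
    (hφi : Integrable (fun x => φ (f x)) μ) :
    φ (∫ x, f x ∂μ) ≤ ∫ x, φ (f x) ∂μ := by
  set m := ∫ x, f x ∂μ
  have hm : m ∈ Icc a b := (convex_Icc a b).integral_mem isClosed_Icc hfs hfi
  by_cases hmi : m ∈ interior (Icc a b)
  · set c := derivWithin φ (Ioi m) m
    have hslope : Integrable (fun x => c * (f x - m)) μ :=
      (hfi.sub (integrable_const _)).const_mul c
    have hline : Integrable (fun x => φ m + c * (f x - m)) μ := (integrable_const _).add hslope
    calc φ m = ∫ x, (φ m + c * (f x - m)) ∂μ := by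
          rw [integral_add (integrable_const _) hslope, integral_const_mul,
            integral_sub hfi (integrable_const _)]
          simp [m]
      _ ≤ ∫ x, φ (f x) ∂μ := integral_mono_ae hline hφi
          (hfs.mono fun x hx => hφ.add_rightDeriv_mul_sub_le hmi hx)
  -- at an endpoint of the interval, `f` is a.e. equal to its mean
  have hconst : f =ᵐ[μ] fun _ => m := by
    rw [interior_Icc, mem_Ioo, not_and_or, not_lt, not_lt] at hmi
    rcases hmi with ham | hbm
    · have ha : m = a := le_antisymm ham hm.1
      rw [ha]
      exact ((integral_eq_iff_of_ae_le (integrable_const a) hfi (hfs.mono fun x hx => hx.1)).1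
        (by simp [← ha, m])).symm
    · have hb : m = b := le_antisymm hm.2 hbm
      rw [hb]
      exact (integral_eq_iff_of_ae_le hfi (integrable_const b) (hfs.mono fun x hx => hx.2)).1
        (by simp [← hb, m])
  rw [integral_congr_ae (g := fun _ => φ m) (hconst.mono fun x hx => congrArg φ hx)]
  simp

theorem ConvexOn.integrable_comp_of_mem_Icc {α : Type*} [MeasurableSpace α] {μ : Measure α}
    [IsFiniteMeasure μ] {a b : ℝ} {φ : ℝ → ℝ} (hφ : ConvexOn ℝ (Icc a b) φ) {f : α → ℝ}
    (hf : Measurable f) (hfs : ∀ x, f x ∈ Icc a b) : Integrable (fun x => φ (f x)) μ := by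
  obtain ⟨C, hC⟩ := hφ.exists_abs_le_on_Icc
  exact .of_bound (hφ.measurable_comp hf hfs).aestronglyMeasurable C
    (.of_forall fun x => hC _ (hfs x))

section MeasureKernel

variable {α β : Type*} [MeasurableSpace α] [MeasurableSpace β]

theorem ProbabilityTheory.Kernel.measurable_apply_Iic (κ : Kernel α ℝ) [IsSFiniteKernel κ] :
    Measurable fun p : α × ℝ => κ p.1 (Iic p.2) :=
  (κ.prodMkRight ℝ).measurable_kernel_prodMk_left
    (measurableSet_le measurable_snd measurable_fst.snd)

theorem MeasureTheory.Measure.integral_comp {E : Type*} [NormedAddCommGroup E] [NormedSpace ℝ E]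
    {μ : Measure α} {κ : Kernel α β} {f : β → E} (hf : Integrable f (κ ∘ₘ μ)) :
    ∫ b, f b ∂(κ ∘ₘ μ) = ∫ a, ∫ b, f b ∂κ a ∂μ := by
  rw [Measure.comp_eq_comp_const_apply] at hf ⊢
  rw [Kernel.integral_comp hf, Kernel.const_apply]

theorem MeasureTheory.Measure.prod_comp_prod {γ δ : Type*} [MeasurableSpace γ] [MeasurableSpace δ]
    {μ : Measure α} {ν : Measure β} [SFinite μ] [SFinite ν]
    {κ : Kernel α γ} {η : Kernel β δ} [IsSFiniteKernel κ] [IsSFiniteKernel η] :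
    (κ ∘ₘ μ).prod (η ∘ₘ ν) = (κ ∥ₖ η) ∘ₘ (μ.prod ν) := by
  rw [Measure.prod_comp_left, Measure.prod_comp_right, Measure.comp_assoc,
    Kernel.parallelComp_comp_parallelComp, Kernel.id_comp, Kernel.comp_id]

theorem MeasureTheory.Measure.eq_compProd_of_apply_prod {ρ : Measure (α × β)} [IsFiniteMeasure ρ]
    {μ : Measure α} [SFinite μ] {κ : Kernel α β} [IsSFiniteKernel κ]
    (h : ∀ A B, MeasurableSet A → MeasurableSet B → ρ (A ×ˢ B) = ∫⁻ x in A, κ x B ∂μ) :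
    ρ = μ ⊗ₘ κ :=
  Measure.ext_prod fun hA hB => by rw [h _ _ hA hB, Measure.compProd_apply_prod hA hB]

end MeasureKernel

section Sensitivity

variable {α β : Type*} [MeasurableSpace α] [MeasurableSpace β]

noncomputable def cdfGap (κ : Kernel α ℝ) (x : α × α) (y : ℝ) : ℝ :=
  (κ x.1 (Iic y)).toReal - (κ x.2 (Iic y)).toReal

noncomputable def sensitivity (φ : ℝ → ℝ) (ν : Measure ℝ) (κ : Kernel α ℝ) (x : α × α) : ℝ :=
  ∫ y, φ (cdfGap κ x y) ∂ν

theorem measurable_cdfGap_uncurry (κ : Kernel α ℝ) [IsSFiniteKernel κ] :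
    Measurable fun q : (α × α) × ℝ => cdfGap κ q.1 q.2 :=
  (κ.measurable_apply_Iic.comp (measurable_fst.fst.prodMk measurable_snd)).ennreal_toReal.sub
    (κ.measurable_apply_Iic.comp (measurable_fst.snd.prodMk measurable_snd)).ennreal_toReal

theorem cdfGap_mem_Icc (κ : Kernel α ℝ) [IsMarkovKernel κ] (x : α × α) (y : ℝ) :
    cdfGap κ x y ∈ Icc (-1) 1 := by
  have h : ∀ a, (κ a (Iic y)).toReal ∈ Icc (0 : ℝ) 1 := fun a =>
    ⟨ENNReal.toReal_nonneg, measureReal_le_one⟩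
  unfold cdfGap
  constructor <;> linarith [(h x.1).1, (h x.1).2, (h x.2).1, (h x.2).2]

theorem cdfGap_comp (κ : Kernel α ℝ) [IsMarkovKernel κ] (η : Kernel β α) [IsMarkovKernel η]
    (z : β × β) (y : ℝ) : cdfGap (κ ∘ₖ η) z y = ∫ x, cdfGap κ x y ∂((η ∥ₖ η) z) := by
  have hmeas : Measurable fun x => (κ x (Iic y)).toReal :=
    (κ.measurable_coe measurableSet_Iic).ennreal_toReal
  have hcomp : ∀ b, ((κ ∘ₖ η) b (Iic y)).toReal = ∫ x, (κ x (Iic y)).toReal ∂η b := fun b => by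
    rw [Kernel.comp_apply' _ _ _ measurableSet_Iic, integral_toReal
      (κ.measurable_coe measurableSet_Iic).aemeasurable (.of_forall fun _ => measure_lt_top _ _)]
  have hint : ∀ b, Integrable (fun x => (κ x (Iic y)).toReal) (η b) := fun b =>
    .of_bound hmeas.aestronglyMeasurable 1 (.of_forall fun x => by
      rw [Real.norm_of_nonneg ENNReal.toReal_nonneg, ← measureReal_def]
      exact measureReal_le_one)
  rw [Kernel.parallelComp_apply]
  unfold cdfGap
  rw [integral_sub ((hint z.1).comp_fst _) ((hint z.2).comp_snd _),
    integral_fun_fst (fun x => (κ x (Iic y)).toReal),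
    integral_fun_snd (fun x => (κ x (Iic y)).toReal), hcomp, hcomp]
  simp

theorem map_integral_cdfGap_le {φ : ℝ → ℝ} (hφ : ConvexOn ℝ (Icc (-1) 1) φ) (κ : Kernel α ℝ)
    [IsMarkovKernel κ] (ρ : Measure (α × α)) [IsProbabilityMeasure ρ] (y : ℝ) :
    φ (∫ x, cdfGap κ x y ∂ρ) ≤ ∫ x, φ (cdfGap κ x y) ∂ρ := by
  have hmeas : Measurable fun x => cdfGap κ x y :=
    (measurable_cdfGap_uncurry κ).comp (measurable_id.prodMk measurable_const)
  exact hφ.map_integral_le_of_mem_Icc (.of_forall fun x => cdfGap_mem_Icc κ x y)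
    (.of_bound hmeas.aestronglyMeasurable 1 (.of_forall fun x => abs_le.2 (cdfGap_mem_Icc κ x y)))
    (hφ.integrable_comp_of_mem_Icc hmeas fun x => cdfGap_mem_Icc κ x y)

theorem integrable_sensitivity {φ : ℝ → ℝ} (hφ : ConvexOn ℝ (Icc (-1) 1) φ) (ν : Measure ℝ)
    [IsProbabilityMeasure ν] (κ : Kernel α ℝ) [IsMarkovKernel κ] (ρ : Measure (α × α))
    [IsFiniteMeasure ρ] : Integrable (sensitivity φ ν κ) ρ := by
  obtain ⟨C, hC⟩ := hφ.exists_abs_le_on_Icc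
  have hmeas : StronglyMeasurable (sensitivity φ ν κ) :=
    (hφ.measurable_comp (measurable_cdfGap_uncurry κ) fun q => cdfGap_mem_Icc κ q.1 q.2)
      |>.stronglyMeasurable.integral_prod_right'
  refine .of_bound hmeas.aestronglyMeasurable C (.of_forall fun x => ?_)
  simpa [sensitivity] using norm_integral_le_of_norm_le_const (μ := ν)
    (f := fun y => φ (cdfGap κ x y))
    (.of_forall fun y => (hC _ (cdfGap_mem_Icc κ x y) : ‖φ (cdfGap κ x y)‖ ≤ C))

theorem sensitivity_comp_le {φ : ℝ → ℝ} (hφ : ConvexOn ℝ (Icc (-1) 1) φ) (ν : Measure ℝ)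
    [IsProbabilityMeasure ν] (κ : Kernel α ℝ) [IsMarkovKernel κ] (η : Kernel β α)
    [IsMarkovKernel η] (z : β × β) :
    sensitivity φ ν (κ ∘ₖ η) z ≤ ∫ x, sensitivity φ ν κ x ∂((η ∥ₖ η) z) := by
  have hprod : Integrable (fun p : ℝ × (α × α) => φ (cdfGap κ p.2 p.1)) (ν.prod ((η ∥ₖ η) z)) :=
    hφ.integrable_comp_of_mem_Icc ((measurable_cdfGap_uncurry κ).comp measurable_swap)
      fun p => cdfGap_mem_Icc κ p.2 p.1
  have hmeas : Measurable (cdfGap (κ ∘ₖ η) z) :=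
    (measurable_cdfGap_uncurry _).comp (measurable_const.prodMk measurable_id)
  calc sensitivity φ ν (κ ∘ₖ η) z ≤ ∫ y, ∫ x, φ (cdfGap κ x y) ∂((η ∥ₖ η) z) ∂ν :=
        integral_mono (hφ.integrable_comp_of_mem_Icc hmeas (cdfGap_mem_Icc _ z))
          hprod.integral_prod_left fun y => by
            rw [cdfGap_comp]
            exact map_integral_cdfGap_le hφ κ _ y
    _ = ∫ x, sensitivity φ ν κ x ∂((η ∥ₖ η) z) := integral_integral_swap hprod

theorem integral_sensitivity_comp_le {φ : ℝ → ℝ} (hφ : ConvexOn ℝ (Icc (-1) 1) φ)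
    (ν : Measure ℝ) [IsProbabilityMeasure ν] (κ : Kernel α ℝ) [IsMarkovKernel κ]
    (η : Kernel β α) [IsMarkovKernel η] (μ : Measure β) [IsProbabilityMeasure μ] :
    ∫ z, sensitivity φ ν (κ ∘ₖ η) z ∂(μ.prod μ) ≤
      ∫ x, sensitivity φ ν κ x ∂((η ∘ₘ μ).prod (η ∘ₘ μ)) := by
  have hint := integrable_sensitivity hφ ν κ ((η ∥ₖ η) ∘ₘ μ.prod μ)
  rw [Measure.prod_comp_prod, Measure.integral_comp hint]
  rw [Measure.comp_eq_comp_const_apply] at hint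
  refine integral_mono (integrable_sensitivity hφ ν _ _) ?_ (sensitivity_comp_le hφ ν κ η)
  simpa using hint.integral_comp

theorem sensitivity_ae_eq (φ : ℝ → ℝ) (ν : Measure ℝ) {μ : Measure α} [SFinite μ]
    {κ κ' : Kernel α ℝ} (h : κ =ᵐ[μ] κ') :
    sensitivity φ ν κ =ᵐ[μ.prod μ] sensitivity φ ν κ' := by
  filter_upwards [Measure.quasiMeasurePreserving_fst.ae h, Measure.quasiMeasurePreserving_snd.ae h]
    with x h1 h2
  simp only [sensitivity, cdfGap, h1, h2]

end Sensitivity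

theorem measureReal_inter_eq_setIntegral_of_condExp_mul {Ω : Type*} {m mΩ : MeasurableSpace Ω}
    {μ : Measure Ω} [IsFiniteMeasure μ] (hm : m ≤ mΩ) {s t : Set Ω} (hs : MeasurableSet s)
    (ht : MeasurableSet t) {f : Ω → ℝ} (hf : StronglyMeasurable[m] f) (hsf : μ⟦s | m⟧ =ᵐ[μ] f)
    (hst : μ⟦s ∩ t | m⟧ =ᵐ[μ] μ⟦s | m⟧ * μ⟦t | m⟧) :
    μ.real (s ∩ t) = ∫ ω in t, f ω ∂μ := by
  have hfi : Integrable f μ := integrable_condExp.congr hsf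
  have hti : Integrable (t.indicator fun _ => (1 : ℝ)) μ := (integrable_const 1).indicator ht
  have hprod : (f * t.indicator fun _ => 1) = t.indicator f := by
    ext ω; by_cases hω : ω ∈ t <;> simp [hω]
  calc μ.real (s ∩ t) = ∫ ω, (μ⟦s ∩ t | m⟧) ω ∂μ := by
        rw [integral_condExp hm, integral_indicator_const _ (hs.inter ht), smul_eq_mul, mul_one]
    _ = ∫ ω, (f * μ⟦t | m⟧) ω ∂μ := integral_congr_ae (hst.trans (hsf.mul (ae_eq_refl _)))
    _ = ∫ ω, μ[f * t.indicator fun _ => 1 | m] ω ∂μ := integral_congr_ae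
        (condExp_mul_of_stronglyMeasurable_left hf (hprod ▸ hfi.indicator ht) hti).symm
    _ = ∫ ω in t, f ω ∂μ := by rw [integral_condExp hm, hprod, integral_indicator ht]

section CondIndep

variable {Ω β γ δ : Type*} {mΩ : MeasurableSpace Ω} {mβ : MeasurableSpace β}
  [StandardBorelSpace β] [Nonempty β] [MeasurableSpace γ] [MeasurableSpace δ]
  {μ : Measure Ω} [IsFiniteMeasure μ] {X : Ω → β} {Z : Ω → δ}

theorem compProd_comp_condDistrib_apply_prod (hX : Measurable X) (hZ : Measurable Z)
    (κ : Kernel β γ) [IsSFiniteKernel κ] {A : Set δ} {B : Set γ} (hA : MeasurableSet A)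
    (hB : MeasurableSet B) :
    (μ.map Z ⊗ₘ (κ ∘ₖ condDistrib X Z μ)) (A ×ˢ B) = ∫⁻ ω in Z ⁻¹' A, κ (X ω) B ∂μ := by
  have hκB : Measurable fun p : δ × β => κ p.2 B := (κ.measurable_coe hB).comp measurable_snd
  calc (μ.map Z ⊗ₘ (κ ∘ₖ condDistrib X Z μ)) (A ×ˢ B)
      = ∫⁻ p in A ×ˢ univ, κ p.2 B ∂(μ.map Z ⊗ₘ condDistrib X Z μ) := by
        rw [Measure.compProd_apply_prod hA hB, Measure.setLIntegral_compProd hκB hA .univ]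
        simp only [Kernel.comp_apply' _ _ _ hB, Measure.restrict_univ]
    _ = ∫⁻ ω in Z ⁻¹' A, κ (X ω) B ∂μ := by
        rw [compProd_map_condDistrib hX.aemeasurable,
          setLIntegral_map (hA.prod .univ) hκB (hZ.prodMk hX), mk_preimage_prod, preimage_univ,
          inter_univ]

theorem map_prod_eq_compProd_comp_condDistrib [StandardBorelSpace γ] [Nonempty γ] {Y : Ω → γ}
    (hX : Measurable X) (hY : Measurable Y) (hZ : Measurable Z) {κ : Kernel β γ}
    [IsFiniteKernel κ] (hκ : μ.map (fun ω => (X ω, Y ω)) = μ.map X ⊗ₘ κ)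
    (hCI : ∀ B A, MeasurableSet B → MeasurableSet A →
      μ⟦Y ⁻¹' B ∩ Z ⁻¹' A | mβ.comap X⟧ =ᵐ[μ]
        μ⟦Y ⁻¹' B | mβ.comap X⟧ * μ⟦Z ⁻¹' A | mβ.comap X⟧) :
    μ.map (fun ω => (Z ω, Y ω)) = μ.map Z ⊗ₘ (κ ∘ₖ condDistrib X Z μ) := by
  refine Measure.ext_prod fun {A B} hA hB => ?_
  have hκX : ∀ᵐ ω ∂μ, condDistrib Y X μ (X ω) = κ (X ω) :=
    ae_of_ae_map hX.aemeasurable (condDistrib_ae_eq_of_measure_eq_compProd_of_measurable hX hY hκ)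
  have hsf : μ⟦Y ⁻¹' B | mβ.comap X⟧ =ᵐ[μ] fun ω => (κ (X ω)).real B :=
    (condDistrib_ae_eq_condExp hX hY hB).symm.trans (hκX.mono fun ω h => by simp only [h])
  have hf : StronglyMeasurable[mβ.comap X] fun ω => (κ (X ω)).real B :=
    ((κ.measurable_coe hB).comp (Measurable.of_comap_le le_rfl)).ennreal_toReal.stronglyMeasurable
  have hreal := measureReal_inter_eq_setIntegral_of_condExp_mul hX.comap_le (hY hB) (hZ hA) hf hsf
    (hCI B A hB hA)
  rw [Measure.map_apply (hZ.prodMk hY) (hA.prod hB), mk_preimage_prod,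
    compProd_comp_condDistrib_apply_prod hX hZ κ hA hB, inter_comm, ← ofReal_measureReal, hreal,
    ofReal_integral_eq_lintegral_ofReal]
  · simp [measureReal_def]
  · exact (integrable_condExp.congr hsf).integrableOn
  · exact .of_forall fun _ => measureReal_nonneg

end CondIndep

/-- Data processing inequality: If Y and Z are conditionally
independent given X, then the sensitivity functional of the conditional
distributions of Y given Z is at most that of Y given X. -/
theorem stmt10 {Ω : Type*} [MeasurableSpace Ω] (P : Measure Ω) [IsProbabilityMeasure P]
    (X Y Z : Ω → ℝ) (hX : Measurable X) (hY : Measurable Y) (hZ : Measurable Z)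
    (κX : Kernel ℝ ℝ) [IsMarkovKernel κX]
    (hκX : ∀ A B : Set ℝ, MeasurableSet A → MeasurableSet B →
      P.map (fun ω => (X ω, Y ω)) (A ×ˢ B) = ∫⁻ x in A, κX x B ∂(P.map X))
    (κZ : Kernel ℝ ℝ) [IsMarkovKernel κZ]
    (hκZ : ∀ A B : Set ℝ, MeasurableSet A → MeasurableSet B →
      P.map (fun ω => (Z ω, Y ω)) (A ×ˢ B) = ∫⁻ z in A, κZ z B ∂(P.map Z))
    (hCI : ∀ B C : Set ℝ, MeasurableSet B → MeasurableSet C →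
      P[fun ω => Set.indicator B (fun _ => (1 : ℝ)) (Y ω) *
          Set.indicator C (fun _ => (1 : ℝ)) (Z ω)
        | MeasurableSpace.comap X Real.measurableSpace]
      =ᵐ[P] fun ω =>
        (P[fun ω' => Set.indicator B (fun _ => (1 : ℝ)) (Y ω')
            | MeasurableSpace.comap X Real.measurableSpace]) ω *
        (P[fun ω' => Set.indicator C (fun _ => (1 : ℝ)) (Z ω')
            | MeasurableSpace.comap X Real.measurableSpace]) ω)
    (φ : ℝ → ℝ) (hφ : ConvexOn ℝ (Set.Icc (-1 : ℝ) 1) φ) :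
    ∫ z : ℝ × ℝ, (∫ y, φ ((κZ z.1 (Set.Iic y)).toReal - (κZ z.2 (Set.Iic y)).toReal)
          ∂(P.map Y)) ∂((P.map Z).prod (P.map Z)) ≤
      ∫ x : ℝ × ℝ, (∫ y, φ ((κX x.1 (Set.Iic y)).toReal - (κX x.2 (Set.Iic y)).toReal)
          ∂(P.map Y)) ∂((P.map X).prod (P.map X)) := by
  have := Measure.isProbabilityMeasure_map (μ := P) hY.aemeasurable
  have := Measure.isProbabilityMeasure_map (μ := P) hZ.aemeasurable
  set η := condDistrib X Z P
  have hCI' : ∀ B A : Set ℝ, MeasurableSet B → MeasurableSet A →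
      P⟦Y ⁻¹' B ∩ Z ⁻¹' A | MeasurableSpace.comap X Real.measurableSpace⟧ =ᵐ[P]
        P⟦Y ⁻¹' B | MeasurableSpace.comap X Real.measurableSpace⟧ *
          P⟦Z ⁻¹' A | MeasurableSpace.comap X Real.measurableSpace⟧ := fun B A hB hA => by
    convert hCI B A hB hA using 2
    · exact inter_indicator_one
    · rfl
  have hZY : P.map (fun ω => (Z ω, Y ω)) = P.map Z ⊗ₘ (κX ∘ₖ η) :=
    map_prod_eq_compProd_comp_condDistrib hX hY hZ (Measure.eq_compProd_of_apply_prod hκX) hCI'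
  have hκZ_ae : κZ =ᵐ[P.map Z] κX ∘ₖ η :=
    Kernel.ae_eq_of_compProd_eq ((Measure.eq_compProd_of_apply_prod hκZ).symm.trans hZY)
  calc _ = ∫ z, sensitivity φ (P.map Y) (κX ∘ₖ η) z ∂((P.map Z).prod (P.map Z)) :=
        integral_congr_ae (sensitivity_ae_eq _ _ hκZ_ae)
    _ ≤ ∫ x, sensitivity φ (P.map Y) κX x ∂((η ∘ₘ P.map Z).prod (η ∘ₘ P.map Z)) :=
        integral_sensitivity_comp_le hφ _ κX η _
    _ = _ := by rw [condDistrib_comp_map hZ.aemeasurable hX.aemeasurable]; rfl
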